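/- Let n ≥ 2, g₀ := 2 − 3/(2n), g₁ := 2 + 3/(2n), δ := (g₁ − g₀)/3 = 1/n, s_k := 2^{2^k} for k ∈ ℕ₀, and let g be defined by g(s) := s^{g₀−1+δ} for 0 < s < 2, g(s) := s_{2k+1}^{−δ}·s^{g₁−1} for s_{2k} ≤ s < s_{2k+1}, and g(s) := s_{2k+2}^{δ}·s^{g₀−1} for s_{2k+1} ≤ s < s_{2k+2} (k ∈ ℕ₀). Then liminf_{s→∞} g(s)/s = 0 and limsup_{s→∞} g(s)/s = ∞. -/

import Mathlib

/-- `s_k = 2^{2^k}`. -/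
noncomputable def skSeq (k : ℕ) : ℝ := (2 : ℝ) ^ (2 ^ k : ℕ)

/-- The concrete oscillating example with `δ = (g₁ − g₀)/3`. -/
noncomputable def gEx (g₀ g₁ : ℝ) (s : ℝ) : ℝ :=
  if s < 2 then s ^ (g₀ - 1 + (g₁ - g₀) / 3)
  else if Nat.floor (Real.logb 2 (Real.logb 2 s)) % 2 = 0 then
    skSeq (Nat.floor (Real.logb 2 (Real.logb 2 s)) + 1) ^ (-((g₁ - g₀) / 3)) * s ^ (g₁ - 1)
  else
    skSeq (Nat.floor (Real.logb 2 (Real.logb 2 s)) + 1) ^ ((g₁ - g₀) / 3) * s ^ (g₀ - 1)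

/-!
Look at `g(s)/s` only at the breakpoints `s = s_m`. Since `s_{m+1} = s_m²`, the factor
`s_{m+1}^{∓δ}` equals `s_m^{∓2δ}`, so `g(s_m)/s_m = s_m^{g₁ - 2 - 2δ}` for even `m` and
`s_m^{g₀ - 2 + 2δ}` for odd `m`. With `δ = 1/n` these exponents are `∓1/(2n)`, so along the
even breakpoints `g(s)/s → 0` and along the odd ones `g(s)/s → ∞`. As `g ≥ 0`, the first
limit is the liminf.
-/

open Filter Topology

section Breakpoints

lemma skSeq_pos (m : ℕ) : 0 < skSeq m := by
  unfold skSeq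
  positivity

lemma two_le_skSeq (m : ℕ) : 2 ≤ skSeq m :=
  le_self_pow₀ one_le_two (Nat.two_pow_pos m).ne'

lemma skSeq_succ (m : ℕ) : skSeq (m + 1) = skSeq m ^ 2 := by
  unfold skSeq
  rw [← pow_mul, pow_succ]

lemma floor_logb_logb_skSeq (m : ℕ) : ⌊Real.logb 2 (Real.logb 2 (skSeq m))⌋₊ = m := by
  simp [skSeq, Real.logb_pow]

lemma tendsto_skSeq_atTop : Tendsto skSeq atTop atTop :=
  tendsto_atTop_mono (fun _ => pow_le_pow_right₀ one_le_two (Nat.lt_two_pow_self).le)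
    (tendsto_pow_atTop_atTop_of_one_lt one_lt_two)

lemma skSeq_succ_rpow (m : ℕ) (x : ℝ) : skSeq (m + 1) ^ x = skSeq m ^ (2 * x) := by
  rw [skSeq_succ, ← Real.rpow_natCast, ← Real.rpow_mul (skSeq_pos m).le, Nat.cast_ofNat]

variable (g₀ g₁ : ℝ)

lemma gEx_skSeq_div_of_even {m : ℕ} (hm : Even m) :
    gEx g₀ g₁ (skSeq m) / skSeq m = skSeq m ^ (g₁ - 2 - 2 * ((g₁ - g₀) / 3)) := by
  have hpos := skSeq_pos m
  rw [gEx, if_neg (two_le_skSeq m).not_gt, floor_logb_logb_skSeq, if_pos (Nat.even_iff.mp hm),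
    skSeq_succ_rpow, ← Real.rpow_add hpos, ← Real.rpow_sub_one hpos.ne']
  ring_nf

lemma gEx_skSeq_div_of_odd {m : ℕ} (hm : Odd m) :
    gEx g₀ g₁ (skSeq m) / skSeq m = skSeq m ^ (g₀ - 2 + 2 * ((g₁ - g₀) / 3)) := by
  have hpos := skSeq_pos m
  rw [gEx, if_neg (two_le_skSeq m).not_gt, floor_logb_logb_skSeq,
    if_neg (Nat.not_even_iff_odd.mpr hm ∘ Nat.even_iff.mpr),
    skSeq_succ_rpow, ← Real.rpow_add hpos, ← Real.rpow_sub_one hpos.ne']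
  ring_nf

lemma gEx_nonneg {s : ℝ} (hs : 0 ≤ s) : 0 ≤ gEx g₀ g₁ s := by
  unfold gEx skSeq
  split_ifs <;> positivity

end Breakpoints

section LimitsAlongSequences

variable {α β : Type*} [CompleteLinearOrder β] [TopologicalSpace β] [OrderTopology β]
  {u : α → β} {l : Filter α} {φ : ℕ → α}

lemma liminf_eq_of_eventually_ge_of_tendsto_comp {a : β} (hφ : Tendsto φ atTop l)
    (hge : ∀ᶠ x in l, a ≤ u x) (hlim : Tendsto (u ∘ φ) atTop (𝓝 a)) : liminf u l = a :=
  le_antisymm (hlim.liminf_eq ▸ hφ.liminf_le_liminf_comp)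
    (le_liminf_of_le (by isBoundedDefault) hge)

lemma limsup_eq_top_of_tendsto_comp (hφ : Tendsto φ atTop l)
    (hlim : Tendsto (u ∘ φ) atTop (𝓝 ⊤)) : limsup u l = ⊤ :=
  top_le_iff.mp (hlim.limsup_eq ▸ hφ.limsup_comp_le_limsup)

end LimitsAlongSequences

/-- With `g₀ = 2 − 3/(2n)` and `g₁ = 2 + 3/(2n)` the concrete example satisfies
`liminf_{s→∞} g(s)/s = 0` and `limsup_{s→∞} g(s)/s = ∞`. -/
theorem stmt_18 (n : ℕ) (hn : 2 ≤ n) :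
    Filter.liminf
      (fun s : ℝ => ((gEx (2 - 3 / (2 * (n : ℝ))) (2 + 3 / (2 * (n : ℝ))) s / s : ℝ) : EReal))
      Filter.atTop = 0 ∧
    Filter.limsup
      (fun s : ℝ => ((gEx (2 - 3 / (2 * (n : ℝ))) (2 + 3 / (2 * (n : ℝ))) s / s : ℝ) : EReal))
      Filter.atTop = ⊤ := by
  have hn0 : (n : ℝ) ≠ 0 := by positivity
  have hc : 0 < 1 / (2 * (n : ℝ)) := by positivity
  have h_even : Tendsto (fun k : ℕ => skSeq (2 * k)) atTop atTop :=
    tendsto_skSeq_atTop.comp (tendsto_atTop_mono (fun k => show k ≤ _ by omega) tendsto_id)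
  have h_odd : Tendsto (fun k : ℕ => skSeq (2 * k + 1)) atTop atTop :=
    tendsto_skSeq_atTop.comp (tendsto_atTop_mono (fun k => show k ≤ _ by omega) tendsto_id)
  constructor
  · refine liminf_eq_of_eventually_ge_of_tendsto_comp h_even ?_ ?_
    · filter_upwards [eventually_ge_atTop 0] with s hs
      exact EReal.coe_nonneg.mpr (div_nonneg (gEx_nonneg _ _ hs) hs)
    · have h := EReal.tendsto_coe.mpr ((tendsto_rpow_neg_atTop hc).comp h_even)
      refine (h.congr fun k => ?_).trans (by rw [EReal.coe_zero])
      simp only [Function.comp_apply, gEx_skSeq_div_of_even _ _ (even_two_mul k)]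
      congr 2
      field_simp
      ring
  · refine limsup_eq_top_of_tendsto_comp h_odd ?_
    refine (EReal.tendsto_coe_atTop.comp ((tendsto_rpow_atTop hc).comp h_odd)).congr fun k => ?_
    simp only [Function.comp_apply, gEx_skSeq_div_of_odd _ _ (odd_two_mul_add_one k)]
    congr 2
    field_simp
    ring
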